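/- Under the same coupled impedance system and gluing conditions, with W = I − R33β·R33α invertible, the interface data for box β satisfies t3β = (−R31α − R33α·W⁻¹·R33β·R31α)·t1α + R33α·W⁻¹·R32β·t2β − (I + R33α·W⁻¹·R33β)·h3α + R33α·W⁻¹·h3β. -/
import Mathlib


open Matrix

/-- Solving the coupled interface system in the HPS merge for `t3β`. -/
theorem hps_merge_t3beta {n p q : ℕ}
    (R31a : Matrix (Fin n) (Fin p) ℂ) (R33a : Matrix (Fin n) (Fin n) ℂ)
    (R32b : Matrix (Fin n) (Fin q) ℂ) (R33b : Matrix (Fin n) (Fin n) ℂ)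
    (t1a : Fin p → ℂ) (t2b : Fin q → ℂ)
    (t3a t3b g3a g3b h3a h3b : Fin n → ℂ)
    (ha : g3a = R31a.mulVec t1a + R33a.mulVec t3a + h3a)
    (hb : g3b = R32b.mulVec t2b + R33b.mulVec t3b + h3b)
    (glue1 : t3a = -g3b) (glue2 : t3b = -g3a)
    (hW : IsUnit (1 - R33b * R33a)) :
    t3b = (-R31a - R33a * (1 - R33b * R33a)⁻¹ * R33b * R31a).mulVec t1a
          + (R33a * (1 - R33b * R33a)⁻¹ * R32b).mulVec t2b
          - ((1 : Matrix (Fin n) (Fin n) ℂ)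
              + R33a * (1 - R33b * R33a)⁻¹ * R33b).mulVec h3a
          + (R33a * (1 - R33b * R33a)⁻¹).mulVec h3b := by
  set a := R33a with ha'
  set b := R33b with hb'
  have hdet : IsUnit (1 - b * a).det := (Matrix.isUnit_iff_isUnit_det _).mp hW
  have hWW : (1 - b * a) * (1 - b * a)⁻¹ = 1 := Matrix.mul_nonsing_inv _ hdet
  have hW'W : (1 - b * a)⁻¹ * (1 - b * a) = 1 := Matrix.nonsing_inv_mul _ hdet
  set Wi := (1 - b * a)⁻¹ with hWidef
  set Vinv : Matrix (Fin n) (Fin n) ℂ := 1 + a * Wi * b with hVinvdef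
  -- Vinv is a two-sided inverse of (1 - a*b)
  have hVinv' : Vinv * (1 - a * b) = 1 := by
    have h1 : Vinv * (1 - a * b)
        = 1 - a * b + a * (Wi * (1 - b * a)) * b := by
      rw [hVinvdef]; noncomm_ring
    rw [h1, hW'W]; noncomm_ring
  -- a * Wi = Vinv * a
  have hcomm : Vinv * a = a * Wi := by
    have h2 : (1 - a * b) * (a * Wi) = a := by
      have h3 : (1 - a * b) * (a * Wi) = a * ((1 - b * a) * Wi) := by
        noncomm_ring
      rw [h3, hWW, mul_one]
    calc Vinv * a = Vinv * ((1 - a * b) * (a * Wi)) := by rw [h2]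
      _ = (Vinv * (1 - a * b)) * (a * Wi) := by rw [mul_assoc]
      _ = a * Wi := by rw [hVinv', one_mul]
  -- explicit forms of the implicit equations
  have e1 : t3b = -(R31a *ᵥ t1a) - a *ᵥ t3a - h3a := by
    rw [glue2, ha]; abel
  have e2 : t3a = -(R32b *ᵥ t2b) - b *ᵥ t3b - h3b := by
    rw [glue1, hb]; abel
  -- the resolved implicit equation for t3b
  have hEq : (1 - a * b) *ᵥ t3b
      = -(R31a *ᵥ t1a) + (a * R32b) *ᵥ t2b - h3a + a *ᵥ h3b := by
    have h3 : a *ᵥ t3a = -(a *ᵥ (R32b *ᵥ t2b)) - (a * b) *ᵥ t3b - a *ᵥ h3b := by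
      rw [e2]
      simp [Matrix.mulVec_sub, Matrix.mulVec_neg, Matrix.mulVec_mulVec]
    rw [Matrix.sub_mulVec, Matrix.one_mulVec]
    nth_rewrite 1 [e1]
    rw [h3]
    simp only [← Matrix.mulVec_mulVec]
    abel
  -- rewrite the goal's matrices in terms of Vinv
  have hM1 : -R31a - a * Wi * b * R31a = -(Vinv * R31a) := by
    rw [hVinvdef, Matrix.add_mul, Matrix.one_mul, neg_add, sub_eq_add_neg,
      Matrix.mul_assoc, Matrix.mul_assoc]
  have hM2 : a * Wi * R32b = Vinv * (a * R32b) := by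
    rw [← Matrix.mul_assoc, hcomm]
  rw [hM1, hM2, ← hcomm]
  have hfin : -(Vinv * R31a) *ᵥ t1a + (Vinv * (a * R32b)) *ᵥ t2b
      - Vinv *ᵥ h3a + (Vinv * a) *ᵥ h3b = Vinv *ᵥ ((1 - a * b) *ᵥ t3b) := by
    rw [hEq]
    simp only [Matrix.mulVec_add, Matrix.mulVec_sub, Matrix.mulVec_neg,
      Matrix.neg_mulVec, ← Matrix.mulVec_mulVec]
    try abel
  rw [hfin, Matrix.mulVec_mulVec, hVinv', Matrix.one_mulVec]
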